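/- Let A be a σ-dictionary with columns a¹,…,a^m ∈ ℝⁿ, let d ≥ 4 be even, and let k be a positive integer multiple of d−2. Let L be a pseudoexpectation on ℝ[u₁,…,u_n] of degree at least k + 2k/(d−2) that satisfies the constraint {‖u‖₂² = 1}. Then L((‖Aᵀu‖_d^d)^{k/(d−2)}) ≤ σ^{k/(d−2)} · L(‖Aᵀu‖_k^k). -/

import Mathlib

/-!
Write `vᵢ = ⟨aⁱ, u⟩`, `W = ∑ vᵢ²`, `d = 2e + 2` and `k = 2et`. The inequality is the image under `L`
of a degree-`dt` sum-of-squares certificate, modulo `‖u‖² = 1`, of the chain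
`(∑ vᵢ^d)^t ≤ W^(t-1) ∑ vᵢ^(k+2) ≤ σ^(t-1) ∑ vᵢ^(k+2) ≤ σ^(t-1) ∑ vᵢ^k ≤ σ^t ∑ vᵢ^k`.
The first step is Hölder's inequality with weights `vᵢ²`, proved by induction on `t` from the
Chebyshev identity `∑ᵢⱼ cᵢcⱼ(yᵢ - yⱼ)(yᵢ^s - yⱼ^s) = 2(∑ c ∑ c y^(s+1) - ∑ c y ∑ c y^s)`, whose
terms are squares times geometric sums of squares. The second uses `W ≤ σ‖u‖²`, a positive
semidefinite quadratic form and hence a sum of squares of linear forms; the third uses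
`vᵢ² ≤ ‖u‖² = 1`.
-/

open MvPolynomial

/-- A degree-`k` pseudoexpectation on `ℝ[u₁,…,u_n]`: a linear functional with `L 1 = 1`
and `L (P²) ≥ 0` whenever `deg (P²) ≤ k`. -/
def IsPseudoExpectation (n k : ℕ) (L : MvPolynomial (Fin n) ℝ → ℝ) : Prop :=
  (∀ P Q : MvPolynomial (Fin n) ℝ, L (P + Q) = L P + L Q) ∧
  (∀ (c : ℝ) (P : MvPolynomial (Fin n) ℝ), L (c • P) = c * L P) ∧
  L 1 = 1 ∧
  ∀ P : MvPolynomial (Fin n) ℝ, (P ^ 2).totalDegree ≤ k → 0 ≤ L (P ^ 2)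

/-- `L` satisfies the constraint `{P = 0}`: `L (P·Q) = 0` for every `Q` with
`deg (P·Q) ≤ k`. -/
def SatisfiesZero (n k : ℕ) (L : MvPolynomial (Fin n) ℝ → ℝ)
    (P : MvPolynomial (Fin n) ℝ) : Prop :=
  ∀ Q : MvPolynomial (Fin n) ℝ, (P * Q).totalDegree ≤ k → L (P * Q) = 0

open scoped Pointwise Matrix

section SOSCone

variable {ι : Type*}

/-- `f ∈ sosCone g D`: `f ≥ 0` has a degree-`D` sum-of-squares proof from the axiom `g = 0`. -/
noncomputable def sosCone (g : MvPolynomial ι ℝ) (D : ℕ) : AddSubmonoid (MvPolynomial ι ℝ) :=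
  AddSubmonoid.closure {f | (IsSquare f ∨ g ∣ f) ∧ f.totalDegree ≤ D}

variable {g f p : MvPolynomial ι ℝ} {D D' : ℕ}

theorem mem_sosCone_of_isSquare (hf : IsSquare f) (hD : f.totalDegree ≤ D) : f ∈ sosCone g D :=
  AddSubmonoid.subset_closure ⟨Or.inl hf, hD⟩

theorem mem_sosCone_of_dvd (hf : g ∣ f) (hD : f.totalDegree ≤ D) : f ∈ sosCone g D :=
  AddSubmonoid.subset_closure ⟨Or.inr hf, hD⟩

theorem sosCone_mono (h : D ≤ D') : sosCone g D ≤ sosCone g D' :=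
  AddSubmonoid.closure_mono fun _ hf => ⟨hf.1, hf.2.trans h⟩

theorem totalDegree_le_of_mem_sosCone (hf : f ∈ sosCone g D) : f.totalDegree ≤ D := by
  have : sosCone g D ≤ (restrictTotalDegree ι ℝ D).toAddSubmonoid :=
    AddSubmonoid.closure_le.2 fun f hf => (mem_restrictTotalDegree ..).2 hf.2
  exact (mem_restrictTotalDegree ..).1 (this hf)

theorem mul_mem_sosCone {f₁ f₂ : MvPolynomial ι ℝ} (h₁ : f₁ ∈ sosCone g D)
    (h₂ : f₂ ∈ sosCone g D') : f₁ * f₂ ∈ sosCone g (D + D') := by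
  have : sosCone g D * sosCone g D' ≤ sosCone g (D + D') := by
    rw [sosCone, sosCone, AddSubmonoid.closure_mul_closure]
    refine AddSubmonoid.closure_mono ?_
    rintro _ ⟨f₁, ⟨hf₁, hd₁⟩, f₂, ⟨hf₂, hd₂⟩, rfl⟩
    refine ⟨?_, (totalDegree_mul f₁ f₂).trans (add_le_add hd₁ hd₂)⟩
    rcases hf₁ with hf₁ | hf₁
    · exact hf₂.imp hf₁.mul (dvd_mul_of_dvd_right · _)
    · exact Or.inr (dvd_mul_of_dvd_left hf₁ _)
  exact this (AddSubmonoid.mul_mem_mul h₁ h₂)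

theorem C_mem_sosCone {c : ℝ} (hc : 0 ≤ c) : C c ∈ sosCone g 0 :=
  mem_sosCone_of_isSquare ⟨C √c, by rw [← map_mul, Real.mul_self_sqrt hc]⟩ (totalDegree_C c).le

theorem smul_mem_sosCone {c : ℝ} (hc : 0 ≤ c) (hf : f ∈ sosCone g D) : c • f ∈ sosCone g D := by
  simpa [smul_eq_C_mul] using mul_mem_sosCone (C_mem_sosCone hc) hf

theorem pow_mem_sosCone (hf : f ∈ sosCone g D) : ∀ k : ℕ, f ^ k ∈ sosCone g (k * D)
  | 0 => by simpa using C_mem_sosCone (g := g) zero_le_one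
  | k + 1 => by simpa [pow_succ, add_mul] using mul_mem_sosCone (pow_mem_sosCone hf k) hf

theorem pow_mem_sosCone_of_even (hp : p.totalDegree ≤ D) {k : ℕ} (hk : Even k) :
    p ^ k ∈ sosCone g (k * D) :=
  mem_sosCone_of_isSquare (hk.isSquare_pow p)
    ((totalDegree_pow p k).trans (Nat.mul_le_mul_left k hp))

theorem pow_sub_pow_mem_sosCone {a b : MvPolynomial ι ℝ} (ha : a ∈ sosCone g D)
    (hba : b - a ∈ sosCone g D) (k : ℕ) : b ^ k - a ^ k ∈ sosCone g (k * D) := by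
  have hb : b ∈ sosCone g D := by simpa using add_mem hba ha
  rw [← geom_sum₂_mul, Finset.sum_mul]
  refine sum_mem fun i hi => sosCone_mono ?_
    (mul_mem_sosCone (mul_mem_sosCone (pow_mem_sosCone hb i) (pow_mem_sosCone ha _)) hba)
  rw [← add_mul, ← add_one_mul]
  have := Finset.mem_range.1 hi
  exact Nat.mul_le_mul_right D (by omega)

theorem sub_mul_pow_sub_pow_mem_sosCone {x y : MvPolynomial ι ℝ} (hx : x ∈ sosCone g D)
    (hy : y ∈ sosCone g D) (k : ℕ) : (x - y) * (x ^ k - y ^ k) ∈ sosCone g ((k + 1) * D) := by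
  have hsq : (x - y) ^ 2 ∈ sosCone g (2 * D) :=
    pow_mem_sosCone_of_even ((totalDegree_sub x y).trans
      (max_le (totalDegree_le_of_mem_sosCone hx) (totalDegree_le_of_mem_sosCone hy))) even_two
  rw [← geom_sum₂_mul, mul_left_comm, ← sq, Finset.sum_mul]
  refine sum_mem fun i hi => sosCone_mono ?_
    (mul_mem_sosCone (mul_mem_sosCone (pow_mem_sosCone hx i) (pow_mem_sosCone hy _)) hsq)
  rw [← add_mul, ← add_mul]
  have := Finset.mem_range.1 hi
  exact Nat.mul_le_mul_right D (by omega)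

theorem sum_sum_mul_mul_sub_mul_sub {R κ : Type*} [CommRing R] (s : Finset κ) (c f h : κ → R) :
    ∑ i ∈ s, ∑ j ∈ s, c i * c j * ((f i - f j) * (h i - h j)) =
      2 * ((∑ i ∈ s, c i) * ∑ i ∈ s, c i * (f i * h i) -
        (∑ i ∈ s, c i * f i) * ∑ i ∈ s, c i * h i) := by
  have expand : ∀ i j, c i * c j * ((f i - f j) * (h i - h j)) =
      c j * (c i * (f i * h i)) + c i * (c j * (f j * h j)) -
        (c i * f i * (c j * h j) + c j * f j * (c i * h i)) := fun i j => by ring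
  simp only [expand, Finset.sum_sub_distrib, Finset.sum_add_distrib, ← Finset.mul_sum,
    ← Finset.sum_mul]
  ring

theorem sum_pow_mul_sum_mul_pow_sub_pow_mem_sosCone {κ : Type*} (s : Finset κ)
    {c y : κ → MvPolynomial ι ℝ} {α β : ℕ} (hc : ∀ i, c i ∈ sosCone g α)
    (hy : ∀ i, y i ∈ sosCone g β) (k : ℕ) :
    (∑ i ∈ s, c i) ^ k * ∑ i ∈ s, c i * y i ^ (k + 1) - (∑ i ∈ s, c i * y i) ^ (k + 1) ∈
      sosCone g ((k + 1) * (α + β)) := by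
  induction k with
  | zero => simp
  | succ k ih =>
    have hcheb : (∑ i ∈ s, c i) * ∑ i ∈ s, c i * y i ^ (k + 2) -
        (∑ i ∈ s, c i * y i) * ∑ i ∈ s, c i * y i ^ (k + 1) ∈
          sosCone g (α + α + (k + 2) * β) := by
      have hsum := sum_sum_mul_mul_sub_mul_sub s c y (fun i => y i ^ (k + 1))
      simp only [← pow_succ'] at hsum
      rw [← inv_smul_smul₀ (two_ne_zero (α := ℝ)) (_ - _), ofNat_smul_eq_nsmul ℝ 2, nsmul_eq_mul,
        Nat.cast_ofNat, ← hsum]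
      exact smul_mem_sosCone (by norm_num) (sum_mem fun i _ => sum_mem fun j _ =>
        mul_mem_sosCone (mul_mem_sosCone (hc i) (hc j))
          (sub_mul_pow_sub_pow_mem_sosCone (hy i) (hy j) (k + 1)))
    have h₁ := mul_mem_sosCone (pow_mem_sosCone (sum_mem (t := s) fun i _ => hc i) k) hcheb
    have h₂ := mul_mem_sosCone (sum_mem (t := s) fun i _ => mul_mem_sosCone (hc i) (hy i)) ih
    convert add_mem (sosCone_mono (D' := (k + 1 + 1) * (α + β)) (le_of_eq (by ring)) h₁)
      (sosCone_mono (le_of_eq (by ring)) h₂) using 1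
    ring

theorem totalDegree_sum_C_mul_X_le [Fintype ι] (b : ι → ℝ) :
    (∑ j, C (b j) * X j : MvPolynomial ι ℝ).totalDegree ≤ 1 :=
  totalDegree_finsetSum_le fun j _ => (totalDegree_mul _ _).trans (by simp [totalDegree_X])

theorem Matrix.PosSemidef.exists_dotProduct_mulVec_eq_sum_sq [Fintype ι]
    {M : Matrix ι ι ℝ} (hM : M.PosSemidef) :
    ∃ B : Matrix ι ι ℝ, ∀ u, u ⬝ᵥ (M *ᵥ u) = ∑ p, (∑ l, B p l * u l) ^ 2 := by
  classical
  obtain ⟨B, rfl⟩ : ∃ B : Matrix ι ι ℝ, M = star B * B := by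
    open scoped MatrixOrder in exact CStarAlgebra.nonneg_iff_eq_star_mul_self.mp hM.nonneg
  refine ⟨B, fun u => ?_⟩
  rw [Matrix.star_eq_conjTranspose, Matrix.conjTranspose_eq_transpose_of_trivial,
    ← Matrix.mulVec_mulVec, Matrix.dotProduct_mulVec, Matrix.vecMul_transpose]
  simp [dotProduct, Matrix.mulVec, sq]

theorem mem_sosCone_of_eval_eq_quadForm [Fintype ι] {M : Matrix ι ι ℝ}
    (hM : M.PosSemidef) (hf : ∀ u, eval u f = u ⬝ᵥ (M *ᵥ u)) : f ∈ sosCone g 2 := by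
  obtain ⟨B, hB⟩ := hM.exists_dotProduct_mulVec_eq_sum_sq
  have hfB : f = ∑ p, (∑ l, C (B p l) * X l) ^ 2 := MvPolynomial.funext fun u => by
    rw [hf, hB]
    simp only [map_sum, map_pow, map_mul, eval_C, eval_X]
  rw [hfB]
  exact sum_mem fun p _ => by
    simpa using pow_mem_sosCone_of_even (g := g) (totalDegree_sum_C_mul_X_le (B p)) even_two

theorem smul_sum_X_sq_sub_sum_sq_mem_sosCone [Fintype ι] {κ : Type*} [Fintype κ] {σ : ℝ}
    {a : κ → ι → ℝ} (hdict : ∀ u : ι → ℝ, ∑ i, (∑ j, a i j * u j) ^ 2 ≤ σ * ∑ j, u j ^ 2) :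
    σ • ∑ j, X j ^ 2 - ∑ i, (∑ j, C (a i j) * X j) ^ 2 ∈ sosCone g 2 := by
  classical
  let A : Matrix κ ι ℝ := Matrix.of a
  have hquad : ∀ u, u ⬝ᵥ ((σ • 1 - Aᴴ * A) *ᵥ u) =
      σ * ∑ j, u j ^ 2 - ∑ i, (∑ j, a i j * u j) ^ 2 := by
    intro u
    rw [Matrix.conjTranspose_eq_transpose_of_trivial, Matrix.sub_mulVec, dotProduct_sub,
      Matrix.smul_mulVec, Matrix.one_mulVec, dotProduct_smul, ← Matrix.mulVec_mulVec,
      Matrix.dotProduct_mulVec, Matrix.vecMul_transpose]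
    simp [A, dotProduct, Matrix.mulVec, sq]
  have hM : (σ • 1 - Aᴴ * A).PosSemidef :=
    .of_dotProduct_mulVec_nonneg ((Matrix.isHermitian_one.smul (IsSelfAdjoint.all σ)).sub
      (Matrix.isHermitian_conjTranspose_mul_self A)) fun u => by
        rw [star_trivial, hquad, sub_nonneg]
        exact hdict u
  exact mem_sosCone_of_eval_eq_quadForm hM fun u => by rw [hquad]; simp

theorem sum_X_sq_sub_sq_mem_sosCone [Fintype ι] {b : ι → ℝ} (hb : ∑ j, b j ^ 2 = 1) :
    ∑ j, X j ^ 2 - (∑ j, C (b j) * X j) ^ 2 ∈ sosCone g 2 := by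
  have hCS : ∀ u : ι → ℝ, ∑ _ : Unit, (∑ j, b j * u j) ^ 2 ≤ 1 * ∑ j, u j ^ 2 := fun u => by
    simpa [hb] using Finset.sum_mul_sq_le_sq_mul_sq Finset.univ b u
  simpa using smul_sum_X_sq_sub_sum_sq_mem_sosCone (g := g) hCS

theorem totalDegree_sum_X_sq_sub_one_le [Fintype ι] :
    (∑ j, X j ^ 2 - 1 : MvPolynomial ι ℝ).totalDegree ≤ 2 :=
  (totalDegree_sub _ _).trans (max_le (totalDegree_finsetSum_le fun j _ =>
    (totalDegree_pow _ _).trans (by simp [totalDegree_X])) (by simp))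

theorem sum_X_sq_sub_one_mul_mem_sosCone [Fintype ι] {Q : MvPolynomial ι ℝ}
    (hQ : Q.totalDegree ≤ D) : (∑ j, X j ^ 2 - 1) * Q ∈ sosCone (∑ j, X j ^ 2 - 1) (2 + D) :=
  mem_sosCone_of_dvd (dvd_mul_right _ _)
    ((totalDegree_mul _ _).trans (add_le_add totalDegree_sum_X_sq_sub_one_le hQ))

theorem pow_sub_pow_add_two_mem_sosCone [Fintype ι] (hp : p.totalDegree ≤ 1)
    (hunit : ∑ j, X j ^ 2 - p ^ 2 ∈ sosCone (∑ j, X j ^ 2 - 1) 2) (r : ℕ) :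
    p ^ (2 * r) - p ^ (2 * r + 2) ∈ sosCone (∑ j, X j ^ 2 - 1) (2 * r + 2) := by
  -- `p^(2r) - p^(2r+2) = p^(2r) (‖X‖² - p²) + (‖X‖² - 1) (-p^(2r))`
  have h₁ := mul_mem_sosCone (pow_mem_sosCone_of_even hp (even_two_mul r)) hunit
  have h₂ := sum_X_sq_sub_one_mul_mem_sosCone (ι := ι) (Q := -p ^ (2 * r)) (D := 2 * r)
    (by simpa using (totalDegree_pow p (2 * r)).trans (Nat.mul_le_mul_left (2 * r) hp))
  rw [mul_one] at h₁
  convert add_mem h₁ (sosCone_mono (by omega) h₂) using 1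
  ring

theorem smul_sum_pow_sub_sum_pow_pow_mem_sosCone [Fintype ι] {κ : Type*} [Fintype κ]
    {v : κ → MvPolynomial ι ℝ} {σ : ℝ} (hσ : 1 ≤ σ) (hv : ∀ i, (v i).totalDegree ≤ 1)
    (hunit : ∀ i, ∑ j, X j ^ 2 - v i ^ 2 ∈ sosCone (∑ j, X j ^ 2 - 1) 2)
    (hdict : σ • ∑ j, X j ^ 2 - ∑ i, v i ^ 2 ∈ sosCone (∑ j, X j ^ 2 - 1) 2) (e t : ℕ) :
    σ ^ (t + 1) • ∑ i, v i ^ (2 * e * (t + 1)) - (∑ i, v i ^ (2 * e + 2)) ^ (t + 1) ∈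
      sosCone (∑ j, X j ^ 2 - 1) ((t + 1) * (2 * e + 2)) := by
  set g : MvPolynomial ι ℝ := ∑ j, X j ^ 2 - 1
  have hpow : ∀ i r, Even r → v i ^ r ∈ sosCone g r := fun i r hr => by
    simpa using pow_mem_sosCone_of_even (hv i) hr
  have hW : ∑ i, v i ^ 2 ∈ sosCone g 2 := sum_mem fun i _ => hpow i 2 even_two
  have hσW : C σ - ∑ i, v i ^ 2 ∈ sosCone g 2 := by
    convert add_mem hdict (sum_X_sq_sub_one_mul_mem_sosCone (Q := -C σ) (D := 0) (by simp))
      using 1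
    rw [smul_eq_C_mul]
    ring
  have holder := sum_pow_mul_sum_mul_pow_sub_pow_mem_sosCone Finset.univ
    (fun i => hpow i 2 even_two) (fun i => hpow i (2 * e) (even_two_mul e)) t
  have hT : ∑ i, v i ^ (2 * e * (t + 1) + 2) ∈ sosCone g (2 * e * (t + 1) + 2) :=
    sum_mem fun i _ => hpow i _ (by simp [parity_simps])
  have hWT := mul_mem_sosCone (pow_sub_pow_mem_sosCone hW hσW t) hT
  have hVT : σ ^ t • ∑ i, (v i ^ (2 * e * (t + 1)) - v i ^ (2 * e * (t + 1) + 2)) ∈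
      sosCone g (2 * e * (t + 1) + 2) :=
    smul_mem_sosCone (by positivity) (sum_mem fun i _ => by
      simpa only [mul_assoc] using pow_sub_pow_add_two_mem_sosCone (hv i) (hunit i) (e * (t + 1)))
  have hV : (σ ^ (t + 1) - σ ^ t) • ∑ i, v i ^ (2 * e * (t + 1)) ∈ sosCone g (2 * e * (t + 1)) :=
    smul_mem_sosCone (sub_nonneg.2 (pow_le_pow_right₀ hσ t.le_succ))
      (sum_mem fun i _ => hpow i _ (by simp [parity_simps]))
  have hexp₁ : ∀ i, v i ^ 2 * (v i ^ (2 * e)) ^ (t + 1) = v i ^ (2 * e * (t + 1) + 2) :=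
    fun i => by ring
  have hexp₂ : ∀ i, v i ^ 2 * v i ^ (2 * e) = v i ^ (2 * e + 2) := fun i => by ring
  simp only [hexp₁, hexp₂] at holder
  have hD : ∀ {D}, D ≤ (t + 1) * (2 * e + 2) → sosCone g D ≤ _ := sosCone_mono
  convert add_mem (add_mem (add_mem (hD (by ring_nf; omega) holder)
    (hD (by ring_nf; omega) hWT)) (hD (by ring_nf; omega) hVT)) (hD (by ring_nf; omega) hV) using 1
  rw [Finset.sum_sub_distrib]
  simp only [smul_eq_C_mul, map_sub, map_pow]
  ring

end SOSCone

namespace IsPseudoExpectation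

variable {n K : ℕ} {L : MvPolynomial (Fin n) ℝ → ℝ}

def toLinearMap (hL : IsPseudoExpectation n K L) : MvPolynomial (Fin n) ℝ →ₗ[ℝ] ℝ where
  toFun := L
  map_add' := hL.1
  map_smul' := hL.2.1

theorem nonneg_of_mem_sosCone (hL : IsPseudoExpectation n K L) {g f : MvPolynomial (Fin n) ℝ}
    (hg : SatisfiesZero n K L g) (hf : f ∈ sosCone g K) : 0 ≤ L f := by
  induction hf using AddSubmonoid.closure_induction with
  | mem f hf =>
    obtain ⟨⟨r, rfl⟩ | ⟨Q, rfl⟩, hD⟩ := hf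
    · rw [← sq] at hD ⊢
      exact hL.2.2.2 r hD
    · exact (hg Q hD).ge
  | zero => exact (map_zero hL.toLinearMap).ge
  | add f₁ f₂ _ _ h₁ h₂ => exact (hL.1 f₁ f₂).symm ▸ add_nonneg h₁ h₂

theorem le_of_sub_mem_sosCone (hL : IsPseudoExpectation n K L) {g p q : MvPolynomial (Fin n) ℝ}
    (hg : SatisfiesZero n K L g) (h : q - p ∈ sosCone g K) : L p ≤ L q := by
  have := hL.nonneg_of_mem_sosCone hg h
  rwa [show L (q - p) = L q - L p from map_sub hL.toLinearMap q p, sub_nonneg] at this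

end IsPseudoExpectation

theorem stmt15_general (n m : ℕ) (σ : ℝ) (hσ : 1 ≤ σ)
    (a : Fin m → Fin n → ℝ)
    (hunit : ∀ i, ∑ j, a i j ^ 2 = 1)
    (hdict : ∀ u : Fin n → ℝ, ∑ i, (∑ j, a i j * u j) ^ 2 ≤ σ * ∑ j, u j ^ 2)
    (d : ℕ) (hde : Even d)
    (k : ℕ) (hk : 0 < k) (hdvd : (d - 2) ∣ k)
    (K : ℕ) (hK : k + 2 * k / (d - 2) ≤ K)
    (L : MvPolynomial (Fin n) ℝ → ℝ)
    (hL : IsPseudoExpectation n K L)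
    (hc : SatisfiesZero n K L ((∑ j, X j ^ 2) - 1)) :
    L ((∑ i, (∑ j, C (a i j) * X j) ^ d) ^ (k / (d - 2))) ≤
      σ ^ (k / (d - 2)) * L (∑ i, (∑ j, C (a i j) * X j) ^ k) := by
  obtain ⟨t, rfl⟩ := hdvd
  have hd : d - 2 ≠ 0 := by rintro h; simp [h] at hk
  obtain ⟨e, rfl⟩ : ∃ e, d = 2 * e + 2 := by obtain ⟨r, rfl⟩ := hde; exact ⟨r - 1, by omega⟩
  obtain ⟨s, rfl⟩ : ∃ s, t = s + 1 := Nat.exists_eq_succ_of_ne_zero (by rintro rfl; simp at hk)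
  rw [Nat.add_sub_cancel] at hd hK ⊢
  rw [mul_left_comm, Nat.mul_div_cancel_left _ (Nat.pos_of_ne_zero hd)] at hK
  rw [Nat.mul_div_cancel_left _ (Nat.pos_of_ne_zero hd)]
  have hcert := smul_sum_pow_sub_sum_pow_pow_mem_sosCone hσ
    (fun i => totalDegree_sum_C_mul_X_le _) (fun i => sum_X_sq_sub_sq_mem_sosCone (hunit i))
    (smul_sum_X_sq_sub_sum_sq_mem_sosCone hdict) e s
  calc _ ≤ L (σ ^ (s + 1) • ∑ i, (∑ j, C (a i j) * X j) ^ (2 * e * (s + 1))) :=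
        hL.le_of_sub_mem_sosCone hc (sosCone_mono (by ring_nf at hK ⊢; omega) hcert)
    _ = _ := hL.2.1 _ _

/-- SOS Hölder: for a `σ`-dictionary `A`, even `d ≥ 4`, `k` a positive multiple of `d-2`,
and a pseudoexpectation `L` of degree at least `k + 2k/(d-2)` satisfying `{‖u‖₂² = 1}`,
`L ((‖Aᵀu‖_d^d)^{k/(d-2)}) ≤ σ^{k/(d-2)} L (‖Aᵀu‖_k^k)`. -/
theorem stmt15 (n m : ℕ) (σ : ℝ) (hσ : 1 ≤ σ)
    (a : Fin m → Fin n → ℝ)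
    (hunit : ∀ i, ∑ j, a i j ^ 2 = 1)
    (hdict : ∀ u : Fin n → ℝ, ∑ i, (∑ j, a i j * u j) ^ 2 ≤ σ * ∑ j, u j ^ 2)
    (d : ℕ) (hd4 : 4 ≤ d) (hde : Even d)
    (k : ℕ) (hk : 0 < k) (hdvd : (d - 2) ∣ k)
    (K : ℕ) (hK : k + 2 * k / (d - 2) ≤ K)
    (L : MvPolynomial (Fin n) ℝ → ℝ)
    (hL : IsPseudoExpectation n K L)
    (hc : SatisfiesZero n K L ((∑ j, X j ^ 2) - 1)) :
    L ((∑ i, (∑ j, C (a i j) * X j) ^ d) ^ (k / (d - 2))) ≤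
      σ ^ (k / (d - 2)) * L (∑ i, (∑ j, C (a i j) * X j) ^ k) :=
  stmt15_general n m σ hσ a hunit hdict d hde k hk hdvd K hK L hL hc
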